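/- Let R be a nonzero left diring and define the 3-radical rad₃(R) as the intersection of the annihilators of all 3-irreducible left R-modules. Then: (a) rad₃(R) equals the intersection of all 3-primitive ideals of R; (b) R is 3-semi-primitive if and only if rad₃(R) = 0; (c) the quotient left diring R / rad₃(R) satisfies rad₃(R / rad₃(R)) = 0. -/

import Mathlib

universe u v

/-- A left diring: an additive abelian group with a dimonoid structure
(left product `ldL` = ⇀·, right product `ldR` = ↼·) having a left bar-unit `ldE`,
with both products distributing over addition on both sides. -/
class LeftDiring (R : Type u) extends AddCommGroup R where
  ldL : R → R → R
  ldR : R → R → R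
  ldE : R
  ax1 : ∀ x y z : R, ldL x (ldL y z) = ldL (ldL x y) z
  ax2 : ∀ x y z : R, ldL (ldL x y) z = ldL x (ldR y z)
  ax3 : ∀ x y z : R, ldL (ldR x y) z = ldR x (ldL y z)
  ax4 : ∀ x y z : R, ldR (ldL x y) z = ldR x (ldR y z)
  ax5 : ∀ x y z : R, ldR x (ldR y z) = ldR (ldR x y) z
  ax6 : ∀ x : R, ldR ldE x = x
  dist1 : ∀ x y z : R, ldL x (y + z) = ldL x y + ldL x z
  dist2 : ∀ x y z : R, ldL (x + y) z = ldL x z + ldL y z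
  dist3 : ∀ x y z : R, ldR x (y + z) = ldR x y + ldR x z
  dist4 : ∀ x y z : R, ldR (x + y) z = ldR x z + ldR y z

open LeftDiring

/-- A left module over a left diring `R`: an abelian group `M` with two actions
`la` = ⇀⊙ and `ra` = ↼⊙ satisfying the module axioms. -/
structure DiModule (R : Type u) [LeftDiring R] (M : Type v) [AddCommGroup M] where
  la : R → M → M
  ra : R → M → M
  la_add : ∀ (a : R) (x y : M), la a (x + y) = la a x + la a y
  add_la : ∀ (a b : R) (x : M), la (a + b) x = la a x + la b x
  ra_add : ∀ (a : R) (x y : M), ra a (x + y) = ra a x + ra a y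
  add_ra : ∀ (a b : R) (x : M), ra (a + b) x = ra a x + ra b x
  m1 : ∀ (a b : R) (x : M), la (ldL a b) x = la a (la b x)
  m2 : ∀ (a b : R) (x : M), la (ldL a b) x = la a (ra b x)
  m3 : ∀ (a b : R) (x : M), la (ldR a b) x = ra a (la b x)
  m4 : ∀ (a b : R) (x : M), ra (ldL a b) x = ra a (ra b x)
  m5 : ∀ (a b : R) (x : M), ra (ldR a b) x = ra a (ra b x)
  m6 : ∀ x : M, ra ldE x = x
def IsSubmodule {R : Type} [LeftDiring R] {M : Type} [AddCommGroup M]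
    (mm : DiModule R M) (N : AddSubgroup M) : Prop :=
  ∀ a : R, ∀ x ∈ N, mm.la a x ∈ N ∧ mm.ra a x ∈ N

def halo {R : Type} [LeftDiring R] {M : Type} [AddCommGroup M]
    (mm : DiModule R M) : Set M :=
  {x : M | mm.la ldE x = 0}

/-- 3-irreducibility: the halo is the unique proper submodule between `0` and `M`. -/
def Irr3 {R : Type} [LeftDiring R] {M : Type} [AddCommGroup M]
    (mm : DiModule R M) : Prop :=
  halo mm ≠ {0} ∧ halo mm ≠ Set.univ ∧
  ∀ N : AddSubgroup M, IsSubmodule mm N →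
    (N : Set M) ≠ {0} → (N : Set M) ≠ Set.univ → (N : Set M) = halo mm

/-- `a` lies in the annihilator of `M`. -/
def MemAnn {R : Type} [LeftDiring R] {M : Type} [AddCommGroup M]
    (mm : DiModule R M) (a : R) : Prop :=
  ∀ x : M, mm.la a x = 0 ∧ mm.ra a x = 0

/-- `M` is faithful. -/
def FaithfulAnn {R : Type} [LeftDiring R] {M : Type} [AddCommGroup M]
    (mm : DiModule R M) : Prop :=
  ∀ a : R, MemAnn mm a → a = 0

/-- An ideal of a left diring. -/
def IsIdeal {R : Type} [LeftDiring R] (K : AddSubgroup R) : Prop :=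
  ∀ a ∈ K, ∀ r : R, ldL a r ∈ K ∧ ldR a r ∈ K ∧ ldL r a ∈ K ∧ ldR r a ∈ K

section Quot

variable {R : Type} [LeftDiring R]

lemma ldL_zero (x : R) : ldL x (0 : R) = 0 := by
  have h := dist1 x (0 : R) 0; rw [add_zero] at h; exact left_eq_add.mp h

lemma zero_ldL (x : R) : ldL (0 : R) x = 0 := by
  have h := dist2 (0 : R) 0 x; rw [add_zero] at h; exact left_eq_add.mp h

lemma ldR_zero (x : R) : ldR x (0 : R) = 0 := by
  have h := dist3 x (0 : R) 0; rw [add_zero] at h; exact left_eq_add.mp h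

lemma zero_ldR (x : R) : ldR (0 : R) x = 0 := by
  have h := dist4 (0 : R) 0 x; rw [add_zero] at h; exact left_eq_add.mp h

lemma ldL_neg (x y : R) : ldL x (-y) = -(ldL x y) := by
  have h := dist1 x y (-y); rw [add_neg_cancel, ldL_zero] at h
  exact eq_neg_of_add_eq_zero_right h.symm

lemma neg_ldL (x y : R) : ldL (-x) y = -(ldL x y) := by
  have h := dist2 x (-x) y; rw [add_neg_cancel, zero_ldL] at h
  exact eq_neg_of_add_eq_zero_right h.symm

lemma ldR_neg (x y : R) : ldR x (-y) = -(ldR x y) := by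
  have h := dist3 x y (-y); rw [add_neg_cancel, ldR_zero] at h
  exact eq_neg_of_add_eq_zero_right h.symm

lemma neg_ldR (x y : R) : ldR (-x) y = -(ldR x y) := by
  have h := dist4 x (-x) y; rw [add_neg_cancel, zero_ldR] at h
  exact eq_neg_of_add_eq_zero_right h.symm

lemma ldL_sub (x y z : R) : ldL x (y - z) = ldL x y - ldL x z := by
  rw [sub_eq_add_neg, dist1, ldL_neg, ← sub_eq_add_neg]

lemma sub_ldL (x y z : R) : ldL (x - y) z = ldL x z - ldL y z := by
  rw [sub_eq_add_neg, dist2, neg_ldL, ← sub_eq_add_neg]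

lemma ldR_sub (x y z : R) : ldR x (y - z) = ldR x y - ldR x z := by
  rw [sub_eq_add_neg, dist3, ldR_neg, ← sub_eq_add_neg]

lemma sub_ldR (x y z : R) : ldR (x - y) z = ldR x z - ldR y z := by
  rw [sub_eq_add_neg, dist4, neg_ldR, ← sub_eq_add_neg]

/-- The left product on the quotient by an ideal. -/
def qL (K : AddSubgroup R) (hK : IsIdeal K) : R ⧸ K → R ⧸ K → R ⧸ K :=
  Quotient.map₂ ldL (by
    intro a₁ a₂ ha b₁ b₂ hb
    have ha' : a₂ - a₁ ∈ K := by
      have := QuotientAddGroup.leftRel_apply.mp ha; rwa [neg_add_eq_sub] at this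
    have hb' : b₂ - b₁ ∈ K := by
      have := QuotientAddGroup.leftRel_apply.mp hb; rwa [neg_add_eq_sub] at this
    refine QuotientAddGroup.leftRel_apply.mpr ?_
    have key : -(ldL a₁ b₁) + ldL a₂ b₂ = ldL a₂ (b₂ - b₁) + ldL (a₂ - a₁) b₁ := by
      rw [ldL_sub, sub_ldL]; abel
    rw [key]
    exact K.add_mem (hK _ hb' a₂).2.2.1 (hK _ ha' b₁).1)

/-- The right product on the quotient by an ideal. -/
def qR (K : AddSubgroup R) (hK : IsIdeal K) : R ⧸ K → R ⧸ K → R ⧸ K :=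
  Quotient.map₂ ldR (by
    intro a₁ a₂ ha b₁ b₂ hb
    have ha' : a₂ - a₁ ∈ K := by
      have := QuotientAddGroup.leftRel_apply.mp ha; rwa [neg_add_eq_sub] at this
    have hb' : b₂ - b₁ ∈ K := by
      have := QuotientAddGroup.leftRel_apply.mp hb; rwa [neg_add_eq_sub] at this
    refine QuotientAddGroup.leftRel_apply.mpr ?_
    have key : -(ldR a₁ b₁) + ldR a₂ b₂ = ldR a₂ (b₂ - b₁) + ldR (a₂ - a₁) b₁ := by
      rw [ldR_sub, sub_ldR]; abel
    rw [key]
    exact K.add_mem (hK _ hb' a₂).2.2.2 (hK _ ha' b₁).2.1)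

/-- The quotient left diring of `R` by an ideal `K`. -/
def qDiring (K : AddSubgroup R) (hK : IsIdeal K) : LeftDiring (R ⧸ K) :=
  { (inferInstance : AddCommGroup (R ⧸ K)) with
    ldL := qL K hK
    ldR := qR K hK
    ldE := QuotientAddGroup.mk (ldE : R)
    ax1 := by rintro ⟨x⟩ ⟨y⟩ ⟨z⟩; exact congrArg (QuotientAddGroup.mk) (ax1 x y z)
    ax2 := by rintro ⟨x⟩ ⟨y⟩ ⟨z⟩; exact congrArg (QuotientAddGroup.mk) (ax2 x y z)
    ax3 := by rintro ⟨x⟩ ⟨y⟩ ⟨z⟩; exact congrArg (QuotientAddGroup.mk) (ax3 x y z)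
    ax4 := by rintro ⟨x⟩ ⟨y⟩ ⟨z⟩; exact congrArg (QuotientAddGroup.mk) (ax4 x y z)
    ax5 := by rintro ⟨x⟩ ⟨y⟩ ⟨z⟩; exact congrArg (QuotientAddGroup.mk) (ax5 x y z)
    ax6 := by rintro ⟨x⟩; exact congrArg (QuotientAddGroup.mk) (ax6 x)
    dist1 := by rintro ⟨x⟩ ⟨y⟩ ⟨z⟩; exact congrArg (QuotientAddGroup.mk) (dist1 x y z)
    dist2 := by rintro ⟨x⟩ ⟨y⟩ ⟨z⟩; exact congrArg (QuotientAddGroup.mk) (dist2 x y z)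
    dist3 := by rintro ⟨x⟩ ⟨y⟩ ⟨z⟩; exact congrArg (QuotientAddGroup.mk) (dist3 x y z)
    dist4 := by rintro ⟨x⟩ ⟨y⟩ ⟨z⟩; exact congrArg (QuotientAddGroup.mk) (dist4 x y z) }

end Quot

/-- A 3-primitive left diring. -/
def Prim3 (R : Type) [LeftDiring R] : Prop :=
  ∃ (M : Type) (g : AddCommGroup M) (mm : @DiModule R _ M g),
    @Irr3 R _ M g mm ∧ @FaithfulAnn R _ M g mm

/-- A 3-semi-primitive left diring. -/
def SemiPrim3 (R : Type) [LeftDiring R] : Prop :=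
  ∀ a : R, a ≠ 0 →
    ∃ (M : Type) (g : AddCommGroup M) (mm : @DiModule R _ M g),
      @Irr3 R _ M g mm ∧ ¬ @MemAnn R _ M g mm a

/-- The 3-radical: the intersection of the annihilators of all 3-irreducible
left `R`-modules. -/
def rad3 (R : Type) [LeftDiring R] : Set R :=
  {a : R | ∀ (M : Type) (g : AddCommGroup M) (mm : @DiModule R _ M g),
      @Irr3 R _ M g mm → @MemAnn R _ M g mm a}

/-- A 3-primitive ideal: an ideal whose quotient left diring is 3-primitive. -/
def Prim3Ideal {R : Type} [LeftDiring R] (K : AddSubgroup R) : Prop :=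
  ∃ hK : IsIdeal K, @Prim3 (R ⧸ K) (qDiring K hK)

section Aux

variable {S : Type} [LeftDiring S] {M : Type} [AddCommGroup M]

lemma dm_la_zero_left (mm : DiModule S M) (x : M) : mm.la 0 x = 0 := by
  have h := mm.add_la 0 0 x; rw [add_zero] at h
  exact left_eq_add.mp h

lemma dm_ra_zero_left (mm : DiModule S M) (x : M) : mm.ra 0 x = 0 := by
  have h := mm.add_ra 0 0 x; rw [add_zero] at h
  exact left_eq_add.mp h

lemma dm_la_zero (mm : DiModule S M) (a : S) : mm.la a 0 = 0 := by
  have h := mm.la_add a 0 0; rw [add_zero] at h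
  exact left_eq_add.mp h

lemma dm_ra_zero (mm : DiModule S M) (a : S) : mm.ra a 0 = 0 := by
  have h := mm.ra_add a 0 0; rw [add_zero] at h
  exact left_eq_add.mp h

lemma dm_la_neg (mm : DiModule S M) (a : S) (x : M) : mm.la (-a) x = -(mm.la a x) := by
  have h := mm.add_la a (-a) x; rw [add_neg_cancel, dm_la_zero_left] at h
  exact eq_neg_of_add_eq_zero_right h.symm

lemma dm_ra_neg (mm : DiModule S M) (a : S) (x : M) : mm.ra (-a) x = -(mm.ra a x) := by
  have h := mm.add_ra a (-a) x; rw [add_neg_cancel, dm_ra_zero_left] at h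
  exact eq_neg_of_add_eq_zero_right h.symm

lemma memAnn_zero (mm : DiModule S M) : MemAnn mm 0 :=
  fun x => ⟨dm_la_zero_left mm x, dm_ra_zero_left mm x⟩

/-- The annihilator as an additive subgroup. -/
def annSub (mm : DiModule S M) : AddSubgroup S where
  carrier := {a | MemAnn mm a}
  zero_mem' := memAnn_zero mm
  add_mem' := by
    intro a b ha hb x
    refine ⟨?_, ?_⟩
    · rw [mm.add_la, (ha x).1, (hb x).1, add_zero]
    · rw [mm.add_ra, (ha x).2, (hb x).2, add_zero]
  neg_mem' := by
    intro a ha x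
    refine ⟨?_, ?_⟩
    · rw [dm_la_neg, (ha x).1, neg_zero]
    · rw [dm_ra_neg, (ha x).2, neg_zero]

lemma annSub_ideal (mm : DiModule S M) : IsIdeal (annSub mm) := by
  intro a ha r
  refine ⟨fun x => ⟨?_, ?_⟩, fun x => ⟨?_, ?_⟩, fun x => ⟨?_, ?_⟩, fun x => ⟨?_, ?_⟩⟩
  · rw [mm.m2]; exact (ha _).1
  · rw [mm.m4]; exact (ha _).2
  · rw [mm.m3]; exact (ha _).2
  · rw [mm.m5]; exact (ha _).2
  · rw [mm.m2, (ha x).2, dm_la_zero]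
  · rw [mm.m4, (ha x).2, dm_ra_zero]
  · rw [mm.m3, (ha x).1, dm_ra_zero]
  · rw [mm.m5, (ha x).2, dm_ra_zero]

end Aux

section Transfer

variable {R : Type} [LeftDiring R] {M : Type} [AddCommGroup M]

/-- Pull back a module over the quotient diring to a module over `R`. -/
def pullback (K : AddSubgroup R) (hK : IsIdeal K)
    (mm' : @DiModule (R ⧸ K) (qDiring K hK) M _) : DiModule R M :=
  letI := qDiring K hK
  { la := fun a x => mm'.la (QuotientAddGroup.mk a) x
    ra := fun a x => mm'.ra (QuotientAddGroup.mk a) x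
    la_add := fun a x y => mm'.la_add _ x y
    add_la := fun a b x => mm'.add_la (QuotientAddGroup.mk a) (QuotientAddGroup.mk b) x
    ra_add := fun a x y => mm'.ra_add _ x y
    add_ra := fun a b x => mm'.add_ra (QuotientAddGroup.mk a) (QuotientAddGroup.mk b) x
    m1 := fun a b x => mm'.m1 (QuotientAddGroup.mk a) (QuotientAddGroup.mk b) x
    m2 := fun a b x => mm'.m2 (QuotientAddGroup.mk a) (QuotientAddGroup.mk b) x
    m3 := fun a b x => mm'.m3 (QuotientAddGroup.mk a) (QuotientAddGroup.mk b) x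
    m4 := fun a b x => mm'.m4 (QuotientAddGroup.mk a) (QuotientAddGroup.mk b) x
    m5 := fun a b x => mm'.m5 (QuotientAddGroup.mk a) (QuotientAddGroup.mk b) x
    m6 := fun x => mm'.m6 x }

lemma halo_pullback (K : AddSubgroup R) (hK : IsIdeal K)
    (mm' : @DiModule (R ⧸ K) (qDiring K hK) M _) :
    halo (pullback K hK mm') = @halo (R ⧸ K) (qDiring K hK) M _ mm' := rfl

lemma isSubmodule_pullback (K : AddSubgroup R) (hK : IsIdeal K)
    (mm' : @DiModule (R ⧸ K) (qDiring K hK) M _) (N : AddSubgroup M) :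
    IsSubmodule (pullback K hK mm') N ↔
      @IsSubmodule (R ⧸ K) (qDiring K hK) M _ mm' N := by
  constructor
  · intro h q x hx
    obtain ⟨a, rfl⟩ := QuotientAddGroup.mk_surjective q
    exact h a x hx
  · intro h a x hx
    exact h (QuotientAddGroup.mk a) x hx

lemma irr3_pullback (K : AddSubgroup R) (hK : IsIdeal K)
    (mm' : @DiModule (R ⧸ K) (qDiring K hK) M _) :
    Irr3 (pullback K hK mm') ↔ @Irr3 (R ⧸ K) (qDiring K hK) M _ mm' := by
  unfold Irr3
  rw [halo_pullback]
  constructor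
  · rintro ⟨h1, h2, h3⟩
    exact ⟨h1, h2, fun N hN => h3 N ((isSubmodule_pullback K hK mm' N).mpr hN)⟩
  · rintro ⟨h1, h2, h3⟩
    exact ⟨h1, h2, fun N hN => h3 N ((isSubmodule_pullback K hK mm' N).mp hN)⟩

lemma memAnn_pullback (K : AddSubgroup R) (hK : IsIdeal K)
    (mm' : @DiModule (R ⧸ K) (qDiring K hK) M _) (a : R) :
    MemAnn (pullback K hK mm') a ↔
      @MemAnn (R ⧸ K) (qDiring K hK) M _ mm' (QuotientAddGroup.mk a) := Iff.rfl

/-- Descend a module over `R` to a module over the quotient diring,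
provided `K` annihilates it. -/
def descend (mm : DiModule R M) (K : AddSubgroup R) (hK : IsIdeal K)
    (hann : ∀ a ∈ K, MemAnn mm a) : @DiModule (R ⧸ K) (qDiring K hK) M _ :=
  letI := qDiring K hK
  let wdla : ∀ (x : M) (a b : R), (QuotientAddGroup.leftRel K).r a b →
      mm.la a x = mm.la b x := by
    intro x a b hab
    have hmem : -a + b ∈ K := QuotientAddGroup.leftRel_apply.mp hab
    have h : mm.la b x = mm.la a x + mm.la (-a + b) x := by
      rw [← mm.add_la, add_neg_cancel_left]
    rw [h, (hann _ hmem x).1, add_zero]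
  let wdra : ∀ (x : M) (a b : R), (QuotientAddGroup.leftRel K).r a b →
      mm.ra a x = mm.ra b x := by
    intro x a b hab
    have hmem : -a + b ∈ K := QuotientAddGroup.leftRel_apply.mp hab
    have h : mm.ra b x = mm.ra a x + mm.ra (-a + b) x := by
      rw [← mm.add_ra, add_neg_cancel_left]
    rw [h, (hann _ hmem x).2, add_zero]
  { la := fun q x => Quotient.liftOn' q (fun a => mm.la a x) (wdla x)
    ra := fun q x => Quotient.liftOn' q (fun a => mm.ra a x) (wdra x)
    la_add := by rintro ⟨a⟩ x y; exact mm.la_add a x y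
    add_la := by rintro ⟨a⟩ ⟨b⟩ x; exact mm.add_la a b x
    ra_add := by rintro ⟨a⟩ x y; exact mm.ra_add a x y
    add_ra := by rintro ⟨a⟩ ⟨b⟩ x; exact mm.add_ra a b x
    m1 := by rintro ⟨a⟩ ⟨b⟩ x; exact mm.m1 a b x
    m2 := by rintro ⟨a⟩ ⟨b⟩ x; exact mm.m2 a b x
    m3 := by rintro ⟨a⟩ ⟨b⟩ x; exact mm.m3 a b x
    m4 := by rintro ⟨a⟩ ⟨b⟩ x; exact mm.m4 a b x
    m5 := by rintro ⟨a⟩ ⟨b⟩ x; exact mm.m5 a b x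
    m6 := fun x => mm.m6 x }

lemma pullback_descend (mm : DiModule R M) (K : AddSubgroup R) (hK : IsIdeal K)
    (hann : ∀ a ∈ K, MemAnn mm a) :
    pullback K hK (descend mm K hK hann) = mm := rfl

end Transfer

/-- For a nonzero left diring `R`: (a) `rad₃(R)` is the intersection of the
3-primitive ideals of `R`; (b) `R` is 3-semi-primitive iff `rad₃(R) = 0`;
(c) `rad₃(R / rad₃(R)) = 0`. -/
theorem stmt19 {R : Type} [LeftDiring R] (hR : ∃ a : R, a ≠ 0) :
    (rad3 R = ⋂ K ∈ {K : AddSubgroup R | Prim3Ideal K}, (K : Set R)) ∧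
    (SemiPrim3 R ↔ rad3 R = {0}) ∧
    (∀ (K : AddSubgroup R) (hK : IsIdeal K), (K : Set R) = rad3 R →
      @rad3 (R ⧸ K) (qDiring K hK) = {(0 : R ⧸ K)}) := by
  refine ⟨?_, ?_, ?_⟩
  · -- (a)
    ext a
    simp only [Set.mem_iInter, Set.mem_setOf_eq]
    constructor
    · intro ha K hKprim
      obtain ⟨hK, M, g, mm', hirr, hfaith⟩ := hKprim
      letI := g
      have hirrP : Irr3 (pullback K hK mm') := (irr3_pullback K hK mm').mpr hirr
      have hann := ha M g (pullback K hK mm') hirrP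
      exact (QuotientAddGroup.eq_zero_iff a).mp
        (hfaith _ ((memAnn_pullback K hK mm' a).mp hann))
    · intro h M g mm hirr
      letI := g
      have hann : ∀ b ∈ annSub mm, MemAnn mm b := fun b hb => hb
      have hKprim : Prim3Ideal (annSub mm) := by
        refine ⟨annSub_ideal mm, M, g, descend mm (annSub mm) (annSub_ideal mm) hann, ?_, ?_⟩
        · refine (irr3_pullback _ _ _).mp ?_
          rw [pullback_descend mm (annSub mm) (annSub_ideal mm) hann]
          exact hirr
        · intro q hq
          obtain ⟨b, rfl⟩ := QuotientAddGroup.mk_surjective q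
          have hb : MemAnn (pullback (annSub mm) (annSub_ideal mm)
              (descend mm (annSub mm) (annSub_ideal mm) hann)) b :=
            (memAnn_pullback _ _ _ b).mpr hq
          rw [pullback_descend mm (annSub mm) (annSub_ideal mm) hann] at hb
          exact (QuotientAddGroup.eq_zero_iff b).mpr hb
      exact h (annSub mm) hKprim
  · -- (b)
    constructor
    · intro hsp
      ext a
      simp only [Set.mem_singleton_iff]
      constructor
      · intro ha
        by_contra hne
        obtain ⟨M, g, mm, hirr, hnann⟩ := hsp a hne
        exact hnann (ha M g mm hirr)
      · rintro rfl
        intro M g mm _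
        letI := g
        exact memAnn_zero mm
    · intro hrad a hne
      have hna : a ∉ rad3 R := by rw [hrad]; simpa using hne
      simp only [rad3, Set.mem_setOf_eq] at hna
      push_neg at hna
      obtain ⟨M, g, mm, hirr, hnann⟩ := hna
      exact ⟨M, g, mm, hirr, hnann⟩
  · -- (c)
    intro K hK hKeq
    ext q
    simp only [Set.mem_singleton_iff]
    constructor
    · intro hq
      obtain ⟨a, rfl⟩ := QuotientAddGroup.mk_surjective q
      refine (QuotientAddGroup.eq_zero_iff a).mpr ?_
      by_contra hna
      have hnrad : a ∉ rad3 R := by rw [← hKeq]; exact hna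
      simp only [rad3, Set.mem_setOf_eq] at hnrad
      push_neg at hnrad
      obtain ⟨M, g, mm, hirr, hnann⟩ := hnrad
      letI := g
      have hann : ∀ b ∈ K, MemAnn mm b := by
        intro b hb
        have hb' : b ∈ rad3 R := hKeq ▸ hb
        exact hb' M g mm hirr
      have hirr' : @Irr3 (R ⧸ K) (qDiring K hK) M g (descend mm K hK hann) := by
        refine (irr3_pullback _ _ _).mp ?_
        rw [pullback_descend mm K hK hann]
        exact hirr
      have hma := hq M g (descend mm K hK hann) hirr'
      have hb : MemAnn (pullback K hK (descend mm K hK hann)) a :=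
        (memAnn_pullback _ _ _ a).mpr hma
      rw [pullback_descend mm K hK hann] at hb
      exact hnann hb
    · rintro rfl
      intro M g mm' _
      letI := g
      exact @memAnn_zero _ (qDiring K hK) M g mm'
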